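/- Symmetrically, with φ feasible for (G,w), a weight decrease on edge (u,v) yielding negative-cycle-free w', the function φ'(x) = φ(x) - max{0, -w'_φ(u,v) - D(x)}, where D(x) is the shortest x-to-u path distance with respect to w_φ, is a feasible potential for (G, w'). -/

import Mathlib

/-- Weight of a path given as a list of vertices: sum of weights of consecutive pairs. -/
def pathWeight {V : Type*} (w : V → V → ℝ) (l : List V) : ℝ :=
  ((l.zip l.tail).map fun p => w p.1 p.2).sum

/-- `l` is a directed path (walk) from `u` to `v` in the graph with edge relation `E`. -/
def IsUVPath {V : Type*} (E : V → V → Prop) (u v : V) (l : List V) : Prop :=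
  l ≠ [] ∧ l.Chain' E ∧ l.head? = some u ∧ l.getLast? = some v

/-- `l` is a directed cycle (closed walk): consecutive pairs are edges and it starts
and ends at the same vertex, traversing at least one edge. -/
def IsCycle {V : Type*} (E : V → V → Prop) (l : List V) : Prop :=
  2 ≤ l.length ∧ l.Chain' E ∧ l.head? = l.getLast?

/-- `w` is consistent with the graph `E`: no directed cycle has negative total weight. -/
def Consistent {V : Type*} (E : V → V → Prop) (w : V → V → ℝ) : Prop :=
  ∀ l, IsCycle E l → 0 ≤ pathWeight w l

/-! Write `w_φ a b = w a b + φ b - φ a`, `c = -w'_φ(u,v)` and `m x = max 0 (c - D x)`, so that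
`φ' = φ - m`. Since `w_φ ≥ 0`, `D` is nonnegative, vanishes at `u` and satisfies the triangle
inequality `D a ≤ w_φ a b + D b` along every edge; the latter makes `m b ≤ w_φ a b + m a`, which is
feasibility on every unchanged edge. On the edge `(u,v)` itself, `m u = max 0 c`, while closing a
`v`-to-`u` path with `(u,v)` gives a cycle whose `w'`-weight is at most `D v - c`, so the absence of
negative cycles forces `c ≤ D v`, i.e. `m v = 0`. -/

section Paths

variable {V : Type*}

lemma pathWeight_cons (w : V → V → ℝ) (a b : V) (l : List V) :
    pathWeight w (a :: b :: l) = w a b + pathWeight w (b :: l) := by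
  simp [pathWeight]

lemma pathWeight_nonneg {E : V → V → Prop} {w : V → V → ℝ} (hw : ∀ a b, E a b → 0 ≤ w a b) :
    ∀ {l : List V}, l.IsChain E → 0 ≤ pathWeight w l
  | [], _ => by simp [pathWeight]
  | [_], _ => by simp [pathWeight]
  | a :: b :: l, h => by
    rw [List.isChain_cons_cons] at h
    rw [pathWeight_cons]
    exact add_nonneg (hw a b h.1) (pathWeight_nonneg hw h.2)

lemma pathWeight_mono {w w' : V → V → ℝ} (h : ∀ a b, w' a b ≤ w a b) :
    ∀ l : List V, pathWeight w' l ≤ pathWeight w l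
  | [] => le_rfl
  | [_] => le_rfl
  | a :: b :: l => by
    rw [pathWeight_cons, pathWeight_cons]
    exact add_le_add (h a b) (pathWeight_mono h (b :: l))

lemma pathWeight_add_potential (w : V → V → ℝ) (φ : V → ℝ) :
    ∀ {l : List V} {x y : V}, l.head? = some x → l.getLast? = some y →
      pathWeight (fun a b => w a b + φ b - φ a) l = pathWeight w l + φ y - φ x
  | [], _, _, hx, _ => by simp at hx
  | [_], _, _, hx, hy => by
    simp only [List.head?_cons, List.getLast?_singleton, Option.some.injEq] at hx hy
    subst hx hy
    simp [pathWeight]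
  | a :: b :: l, _, _, hx, hy => by
    simp only [List.head?_cons, Option.some.injEq] at hx
    subst hx
    rw [List.getLast?_cons_cons] at hy
    rw [pathWeight_cons, pathWeight_cons, pathWeight_add_potential w φ rfl hy]
    ring

lemma pathWeight_append_singleton (w : V → V → ℝ) :
    ∀ {l : List V} {y : V} (z : V), l.getLast? = some y →
      pathWeight w (l ++ [z]) = pathWeight w l + w y z
  | [], _, _, hy => by simp at hy
  | [_], _, _, hy => by
    simp only [List.getLast?_singleton, Option.some.injEq] at hy
    subst hy
    simp [pathWeight]
  | a :: b :: l, _, z, hy => by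
    rw [List.getLast?_cons_cons] at hy
    rw [List.cons_append, List.cons_append, pathWeight_cons, ← List.cons_append,
      pathWeight_append_singleton w z hy, pathWeight_cons]
    ring

variable {E : V → V → Prop}

lemma IsUVPath.singleton (x : V) : IsUVPath E x x [x] :=
  ⟨List.cons_ne_nil _ _, List.isChain_singleton x, rfl, rfl⟩

lemma IsUVPath.cons {a x y : V} {l : List V} (hl : IsUVPath E x y l) (hax : E a x) :
    IsUVPath E a y (a :: l) := by
  obtain ⟨hne, hchain, hx, hy⟩ := hl
  obtain ⟨b, t, rfl⟩ := List.exists_cons_of_ne_nil hne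
  obtain rfl : b = x := by simpa using hx
  refine ⟨List.cons_ne_nil _ _, List.isChain_cons_cons.mpr ⟨hax, hchain⟩, rfl, ?_⟩
  rwa [List.getLast?_cons_cons]

lemma IsUVPath.isCycle_append {x y : V} {l : List V} (hl : IsUVPath E x y l) (hyx : E y x) :
    IsCycle E (l ++ [x]) := by
  obtain ⟨hne, hchain, hx, hy⟩ := hl
  obtain ⟨b, t, rfl⟩ := List.exists_cons_of_ne_nil hne
  refine ⟨by simp, ?_, ?_⟩
  · refine List.isChain_append.mpr ⟨hchain, List.isChain_singleton x, ?_⟩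
    intro p hp q hq
    rw [hy, Option.mem_some_iff] at hp
    rw [List.head?_cons, Option.mem_some_iff] at hq
    exact hp ▸ hq ▸ hyx
  · simp only [List.head?_cons, Option.some.injEq] at hx
    subst hx
    rw [List.getLast?_concat]
    rfl

lemma Consistent.le_pathWeight_add {w : V → V → ℝ} (hw : Consistent E w) {x y : V} {l : List V}
    (hl : IsUVPath E x y l) (hyx : E y x) : 0 ≤ pathWeight w l + w y x := by
  rw [← pathWeight_append_singleton w x hl.2.2.2]
  exact hw _ (hl.isCycle_append hyx)

end Paths

section PathDist

variable {V : Type*} (E : V → V → Prop) (w : V → V → ℝ)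

noncomputable def pathDist (x y : V) : EReal :=
  sInf {r : EReal | ∃ l, IsUVPath E x y l ∧ ((pathWeight w l : ℝ) : EReal) = r}

variable {E w}

lemma pathDist_le_pathWeight {x y : V} {l : List V} (hl : IsUVPath E x y l) :
    pathDist E w x y ≤ pathWeight w l :=
  sInf_le ⟨l, hl, rfl⟩

lemma le_pathDist {x y : V} {r : EReal} (h : ∀ l, IsUVPath E x y l → r ≤ pathWeight w l) :
    r ≤ pathDist E w x y := by
  refine le_sInf ?_
  rintro _ ⟨l, hl, rfl⟩
  exact h l hl

lemma pathDist_nonneg (hw : ∀ a b, E a b → 0 ≤ w a b) (x y : V) : 0 ≤ pathDist E w x y :=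
  le_pathDist fun _ hl => EReal.coe_nonneg.mpr (pathWeight_nonneg hw hl.2.1)

lemma pathDist_self (hw : ∀ a b, E a b → 0 ≤ w a b) (x : V) : pathDist E w x x = 0 :=
  le_antisymm (by simpa [pathWeight] using pathDist_le_pathWeight (w := w) (IsUVPath.singleton x))
    (pathDist_nonneg hw x x)

lemma pathDist_le_add_of_edge {a b : V} (hab : E a b) (y : V) :
    pathDist E w a y ≤ w a b + pathDist E w b y := by
  rw [add_comm, ← EReal.sub_le_iff_le_add (.inl (EReal.coe_ne_bot _)) (.inl (EReal.coe_ne_top _))]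
  refine le_pathDist fun l hl => ?_
  rw [EReal.sub_le_iff_le_add (.inl (EReal.coe_ne_bot _)) (.inl (EReal.coe_ne_top _))]
  obtain ⟨_, t, rfl⟩ := List.exists_cons_of_ne_nil hl.1
  obtain rfl : _ = b := by simpa using hl.2.2.1
  have h := pathDist_le_pathWeight (w := w) (hl.cons hab)
  rwa [pathWeight_cons, add_comm, EReal.coe_add] at h

lemma Consistent.coe_neg_le_pathDist {w' : V → V → ℝ} (hw' : Consistent E w') (φ : V → ℝ)
    (hle : ∀ a b, w' a b ≤ w a b) {u v : V} (huv : E u v) :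
    ((-(w' u v + φ v - φ u) : ℝ) : EReal) ≤ pathDist E (fun a b => w a b + φ b - φ a) v u := by
  refine le_pathDist fun l hl => ?_
  have hcycle := hw'.le_pathWeight_add hl huv
  have hmono := pathWeight_mono hle l
  rw [pathWeight_add_potential w φ hl.2.2.1 hl.2.2.2, EReal.coe_le_coe_iff]
  linarith

end PathDist

namespace EReal

lemma toReal_max_zero_coe (x : ℝ) : (max 0 (x : EReal)).toReal = max 0 x := by
  rw [← coe_zero, ← coe_strictMono.monotone.map_max, toReal_coe]

lemma toReal_max_zero_sub_of_le {c : ℝ} {d : EReal} (h : (c : EReal) ≤ d) :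
    (max 0 ((c : EReal) - d)).toReal = 0 := by
  rw [max_eq_left (sub_nonpos.mpr h), toReal_zero]

lemma toReal_max_zero_sub_zero (c : ℝ) : (max 0 ((c : EReal) - 0)).toReal = max 0 c := by
  rw [sub_zero, toReal_max_zero_coe]

lemma toReal_max_zero_sub_le_add {c t : ℝ} (ht : 0 ≤ t) {d₁ d₂ : EReal} (hd₁ : d₁ ≠ ⊥)
    (h : d₁ ≤ t + d₂) :
    (max 0 ((c : EReal) - d₂)).toReal ≤ t + (max 0 ((c : EReal) - d₁)).toReal := by
  induction d₂ using EReal.rec with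
  | bot => simp_all
  | top => simpa [sub_top] using add_nonneg ht (toReal_nonneg (le_max_left _ _))
  | coe d₂ =>
    lift d₁ to ℝ using ⟨ne_top_of_le_ne_top (coe_ne_top (t + d₂)) h, hd₁⟩
    simp only [← coe_sub, toReal_max_zero_coe]
    have h : d₁ ≤ t + d₂ := mod_cast h
    refine max_le (add_nonneg ht (le_max_left _ _)) ?_
    linarith [le_max_right 0 (c - d₁)]

end EReal

theorem stmt7_general {V : Type*} (E : V → V → Prop) (w : V → V → ℝ) (φ : V → ℝ)
    (hfeas : ∀ a b, E a b → 0 ≤ w a b + φ b - φ a)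
    (u v : V) (w' : V → V → ℝ)
    (hdec : w' u v ≤ w u v)
    (hw' : ∀ a b, ¬(a = u ∧ b = v) → w' a b = w a b)
    (hnoneg : Consistent E w')
    (D : V → EReal)
    (hD : ∀ x, D x = sInf {r : EReal | ∃ l, IsUVPath E x u l ∧
      ((pathWeight (fun a b => w a b + φ b - φ a) l : ℝ) : EReal) = r})
    (φ' : V → ℝ)
    (hφ' : ∀ x, φ' x = φ x -
      (max 0 (((-(w' u v + φ v - φ u) : ℝ) : EReal) - D x)).toReal) :
    ∀ a b, E a b → 0 ≤ w' a b + φ' b - φ' a := by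
  obtain rfl : D = fun x => pathDist E (fun a b => w a b + φ b - φ a) x u := funext hD
  have hle : ∀ a b, w' a b ≤ w a b := fun a b => by
    by_cases h : a = u ∧ b = v
    · obtain ⟨rfl, rfl⟩ := h
      exact hdec
    · exact (hw' a b h).le
  intro a b hab
  simp only [hφ']
  by_cases h : a = u ∧ b = v
  · obtain ⟨rfl, rfl⟩ := h
    rw [pathDist_self hfeas, EReal.toReal_max_zero_sub_zero,
      EReal.toReal_max_zero_sub_of_le (hnoneg.coe_neg_le_pathDist φ hle hab)]
    linarith [le_max_right 0 (-(w' a b + φ b - φ a))]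
  · have hDa : pathDist E (fun a b => w a b + φ b - φ a) a u ≠ ⊥ :=
      ((pathDist_nonneg hfeas a u).trans_lt' EReal.bot_lt_zero).ne'
    have hm := EReal.toReal_max_zero_sub_le_add (c := -(w' u v + φ v - φ u)) (hfeas a b hab) hDa
      (pathDist_le_add_of_edge hab u)
    rw [hw' a b h]
    linarith

/-- Potential update after a weight decrease on edge `(u,v)` (mirrored version):
`φ'(x) = φ(x) - max{0, -w'_φ(u,v) - D(x)}` is feasible for `(G, w')`, where `D(x)`
is the shortest `x`-to-`u` distance w.r.t. `w_φ` (`+∞` if unreachable). -/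
theorem stmt7 {V : Type*} (E : V → V → Prop) (w : V → V → ℝ) (φ : V → ℝ)
    (hfeas : ∀ a b, E a b → 0 ≤ w a b + φ b - φ a)
    (u v : V) (he : E u v) (w' : V → V → ℝ)
    (hdec : w' u v ≤ w u v)
    (hw' : ∀ a b, ¬(a = u ∧ b = v) → w' a b = w a b)
    (hnoneg : Consistent E w')
    (D : V → EReal)
    (hD : ∀ x, D x = sInf {r : EReal | ∃ l, IsUVPath E x u l ∧
      ((pathWeight (fun a b => w a b + φ b - φ a) l : ℝ) : EReal) = r})
    (φ' : V → ℝ)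
    (hφ' : ∀ x, φ' x = φ x -
      (max 0 (((-(w' u v + φ v - φ u) : ℝ) : EReal) - D x)).toReal) :
    ∀ a b, E a b → 0 ≤ w' a b + φ' b - φ' a :=
  stmt7_general E w φ hfeas u v w' hdec hw' hnoneg D hD φ' hφ'
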